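/- Let q be an even prime power with q ≥ n, let k, t ≥ 1 be integers with n/2 ≤ k + t - 1 ≤ n, and let C = GRS_k(α,v) be any [n,k] generalized Reed–Solomon code with pairwise distinct locators α and nonzero multipliers v. Then there exist nonzero multipliers w ∈ F_q^n such that, for the [n,t] generalized Reed–Solomon code D = GRS_t(α,w), the star product S = C ⋆ D is an [n, k+t-1] generalized Reed–Solomon code that is weakly self-dual, i.e., S^⊥ ⊆ S. -/
import Mathlib


open Polynomial Matrix

/-- The generalized Reed–Solomon code `GRS_k(α, v)` of length `n` and dimension `k`,
with code locators `α` and column multipliers `v`: the set of words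
`(v 1 * f(α 1), …, v n * f(α n))` for polynomials `f` of degree `< k`. -/
noncomputable def GRS {F : Type} [Field F] {n : ℕ} (k : ℕ) (α v : Fin n → F) :
    Submodule F (Fin n → F) :=
  Submodule.map (LinearMap.pi fun i => v i • Polynomial.leval (α i))
    (Polynomial.degreeLT F k)

/-- The dual code with respect to the standard bilinear form `(c, x) ↦ ∑ i, c i * x i`. -/
def dualCode {F : Type} [Field F] {ι : Type} [Fintype ι] (C : Submodule F (ι → F)) :
    Submodule F (ι → F) where
  carrier := {x | ∀ c ∈ C, ∑ i, c i * x i = 0}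
  add_mem' := by
    intro a b ha hb c hc
    simp only [Pi.add_apply, mul_add, Finset.sum_add_distrib, ha c hc, hb c hc, add_zero]
  zero_mem' := by intro c hc; simp
  smul_mem' := by
    intro r x hx c hc
    simp only [Pi.smul_apply, smul_eq_mul, mul_left_comm, ← Finset.mul_sum, hx c hc, mul_zero]

/-- The star-product (componentwise/Schur product) code `C ⋆ D`:
the span of all componentwise products of a codeword of `C` with a codeword of `D`. -/
def starProd {F : Type} [Field F] {ι : Type} (C D : Submodule F (ι → F)) :
    Submodule F (ι → F) :=
  Submodule.span F {x | ∃ c ∈ C, ∃ d ∈ D, x = c * d}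

/-- The Cartesian product code `C × C ⊆ F^{2n}`, realized on the index type `Fin n ⊕ Fin n`. -/
def cartProd {F : Type} [Field F] {n : ℕ} (C : Submodule F (Fin n → F)) :
    Submodule F (Fin n ⊕ Fin n → F) where
  carrier := {x | (fun i => x (Sum.inl i)) ∈ C ∧ (fun i => x (Sum.inr i)) ∈ C}
  add_mem' := fun ha hb => ⟨C.add_mem ha.1 hb.1, C.add_mem ha.2 hb.2⟩
  zero_mem' := ⟨C.zero_mem, C.zero_mem⟩
  smul_mem' := fun r x hx => ⟨C.smul_mem r hx.1, C.smul_mem r hx.2⟩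


section AuxLemmas
open Module

variable {F : Type} [Field F] {n : ℕ}

private lemma mem_GRS_iff {k : ℕ} {α v : Fin n → F} {x : Fin n → F} :
    x ∈ GRS k α v ↔ ∃ f ∈ Polynomial.degreeLT F k, x = fun i => v i * f.eval (α i) := by
  constructor
  · rintro ⟨f, hf, rfl⟩; exact ⟨f, hf, by ext i; simp [Polynomial.leval]⟩
  · rintro ⟨f, hf, rfl⟩; exact ⟨f, hf, by ext i; simp [Polynomial.leval]⟩

private lemma GRS_mono {k k' : ℕ} (h : k ≤ k') (α v : Fin n → F) : GRS k α v ≤ GRS k' α v :=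
  Submodule.map_mono (Polynomial.degreeLT_mono h)

private lemma starProd_GRS {k t : ℕ} (hk : 1 ≤ k) (ht : 1 ≤ t) (α v w : Fin n → F) :
    starProd (GRS k α v) (GRS t α w) = GRS (k + t - 1) α (v * w) := by
  classical
  apply le_antisymm
  · rw [starProd, Submodule.span_le]
    rintro x ⟨c, hc, d, hd, rfl⟩
    obtain ⟨f, hf, rfl⟩ := mem_GRS_iff.mp hc
    obtain ⟨g, hg, rfl⟩ := mem_GRS_iff.mp hd
    rw [SetLike.mem_coe, mem_GRS_iff]
    refine ⟨f * g, ?_, by ext i; simp [eval_mul]; ring⟩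
    rw [mem_degreeLT] at *
    rcases eq_or_ne f 0 with rfl | hf0
    · rw [zero_mul]; exact (degree_zero (R := F)) ▸ WithBot.bot_lt_coe _
    rcases eq_or_ne g 0 with rfl | hg0
    · rw [mul_zero]; exact (degree_zero (R := F)) ▸ WithBot.bot_lt_coe _
    rw [← natDegree_lt_iff_degree_lt hf0] at hf
    rw [← natDegree_lt_iff_degree_lt hg0] at hg
    rw [← natDegree_lt_iff_degree_lt (mul_ne_zero hf0 hg0), natDegree_mul hf0 hg0]
    omega
  · rw [GRS, degreeLT_eq_span_X_pow, Submodule.map_span, Submodule.span_le]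
    rintro x ⟨p, hp, rfl⟩
    simp only [Finset.coe_image, Set.mem_image, Finset.mem_coe, Finset.mem_range] at hp
    obtain ⟨m, hm, rfl⟩ := hp
    set a := min m (k - 1) with ha
    set b := m - a with hb
    apply Submodule.subset_span
    refine ⟨(fun i => v i * (X ^ a : F[X]).eval (α i)), ?_,
      (fun i => w i * (X ^ b : F[X]).eval (α i)), ?_, ?_⟩
    · exact mem_GRS_iff.mpr ⟨X ^ a, by rw [mem_degreeLT, degree_X_pow]; exact_mod_cast by omega, rfl⟩
    · exact mem_GRS_iff.mpr ⟨X ^ b, by rw [mem_degreeLT, degree_X_pow]; exact_mod_cast by omega, rfl⟩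
    · ext i
      simp only [LinearMap.pi_apply, LinearMap.smul_apply, Pi.mul_apply]
      have : (a : ℕ) + b = m := by omega
      simp [Polynomial.leval, ← this, pow_add]
      ring

private lemma finrank_GRS {m : ℕ} (hmn : m ≤ n) {α : Fin n → F} (hα : Function.Injective α)
    {v : Fin n → F} (hv : ∀ i, v i ≠ 0) : finrank F (GRS m α v) = m := by
  have hGRS : GRS m α v = LinearMap.range
      ((LinearMap.pi fun i => v i • Polynomial.leval (α i)).comp
        (Polynomial.degreeLT F m).subtype) := by
    rw [LinearMap.range_comp, Submodule.range_subtype]; rfl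
  have hinj : Function.Injective ((LinearMap.pi fun i => v i • Polynomial.leval (α i)).comp
      (Polynomial.degreeLT F m).subtype) := by
    rw [← LinearMap.ker_eq_bot, LinearMap.ker_eq_bot']
    rintro ⟨f, hf⟩ h0
    have hev : ∀ i : Fin n, f.eval (α i) = 0 := by
      intro i
      have h2 : v i * f.eval (α i) = 0 := by
        have := congrFun h0 i
        simpa [Polynomial.leval] using this
      exact (mul_eq_zero.mp h2).resolve_left (hv i)
    have hf0 : f = 0 := by
      apply Polynomial.eq_zero_of_degree_lt_of_eval_index_eq_zero
        (v := α) (Finset.univ : Finset (Fin n)) hα.injOn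
      · refine lt_of_lt_of_le (Polynomial.mem_degreeLT.mp hf) ?_
        simp only [Finset.card_univ, Fintype.card_fin]
        exact_mod_cast Nat.cast_le.mpr hmn
      · intro i _; exact hev i
    exact Subtype.ext hf0
  rw [hGRS, LinearMap.finrank_range_of_inj hinj,
    (Polynomial.degreeLTEquiv F m).finrank_eq, Module.finrank_fin_fun]

private lemma toDual_pi (c x : Fin n → F) :
    (Pi.basisFun F (Fin n)).toDual c x = ∑ i, c i * x i := by
  conv_lhs => rw [← (Pi.basisFun F (Fin n)).sum_repr x, map_sum]
  simp only [_root_.map_smul, Basis.toDual_eq_repr, Pi.basisFun_repr, smul_eq_mul]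
  exact Finset.sum_congr rfl fun i _ => mul_comm _ _

private lemma dualCode_eq (C : Submodule F (Fin n → F)) :
    dualCode C = (C.map ((Pi.basisFun F (Fin n)).toDual)).dualCoannihilator := by
  ext x
  simp only [Submodule.mem_dualCoannihilator, Submodule.mem_map,
    forall_exists_index, and_imp]
  constructor
  · rintro hx φ c hc rfl
    rw [toDual_pi]; exact hx c hc
  · intro hx c hc
    rw [← toDual_pi]; exact hx _ c hc rfl

private lemma finrank_dualCode (C : Submodule F (Fin n → F)) :
    finrank F (dualCode C) = n - finrank F C := by
  rw [dualCode_eq]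
  have h := Subspace.finrank_add_finrank_dualCoannihilator_eq
    (C.map ((Pi.basisFun F (Fin n)).toDual))
  have hm : finrank F (C.map ((Pi.basisFun F (Fin n)).toDual)) = finrank F C := by
    have : (Pi.basisFun F (Fin n)).toDual
        = ((Pi.basisFun F (Fin n)).toDualEquiv : (Fin n → F) →ₗ[F] _) := rfl
    rw [this, LinearEquiv.finrank_map_eq]
  rw [hm, Module.finrank_fin_fun] at h
  omega

/-- `lcf α i = ∏_{j ≠ i} (α i - α j)`. -/
private noncomputable def lcf (α : Fin n → F) (i : Fin n) : F :=
  ∏ j ∈ Finset.univ.erase i, (α i - α j)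

private lemma lcf_ne_zero {α : Fin n → F} (hα : Function.Injective α) (i : Fin n) :
    lcf α i ≠ 0 := by
  rw [lcf, Finset.prod_ne_zero_iff]
  intro j hj
  rw [sub_ne_zero]
  exact fun h => (Finset.mem_erase.mp hj).1 (hα h.symm)

private lemma coeff_basis {α : Fin n → F} (hα : Function.Injective α) (i : Fin n) :
    (Lagrange.basis Finset.univ α i).coeff (n - 1) = (lcf α i)⁻¹ := by
  have hd : (Lagrange.basis Finset.univ α i).natDegree = n - 1 := by
    simpa using Lagrange.natDegree_basis hα.injOn (Finset.mem_univ i)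
  rw [← hd, coeff_natDegree, Lagrange.basis, leadingCoeff_prod, lcf, ← Finset.prod_inv_distrib]
  refine Finset.prod_congr rfl fun j hj => ?_
  rw [Lagrange.basisDivisor, leadingCoeff_mul, leadingCoeff_C,
    (monic_X_sub_C (α j)).leadingCoeff, mul_one]

private lemma coeff_eq_sum {α : Fin n → F} (hα : Function.Injective α) (f : F[X])
    (hf : f.degree < (n : ℕ)) :
    f.coeff (n - 1) = ∑ i, f.eval (α i) * (lcf α i)⁻¹ := by
  have hf' : f.degree < (Finset.univ : Finset (Fin n)).card := by simpa using hf
  conv_lhs => rw [Lagrange.eq_interpolate hα.injOn hf']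
  rw [Lagrange.interpolate_apply, finset_sum_coeff]
  refine Finset.sum_congr rfl fun i _ => ?_
  rw [coeff_C_mul, coeff_basis hα]

private lemma sum_eval_mul_inv_lcf {α : Fin n → F} (hα : Function.Injective α) (f : F[X])
    (hf : f.degree < ((n - 1 : ℕ) : WithBot ℕ)) :
    ∑ i, f.eval (α i) * (lcf α i)⁻¹ = 0 := by
  rcases Nat.eq_zero_or_pos n with rfl | hn
  · simp
  rw [← coeff_eq_sum hα f (lt_of_lt_of_le hf (by exact_mod_cast Nat.sub_le n 1)),
    coeff_eq_zero_of_degree_lt hf]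

private lemma GRS_le_dualCode {m : ℕ} (hm : m ≤ n) {α : Fin n → F}
    (hα : Function.Injective α) {u u' : Fin n → F}
    (huu' : ∀ i, u i * u' i = (lcf α i)⁻¹) :
    GRS (n - m) α u' ≤ dualCode (GRS m α u) := by
  intro x hx c hc
  obtain ⟨g, hg, rfl⟩ := mem_GRS_iff.mp hx
  obtain ⟨f, hf, rfl⟩ := mem_GRS_iff.mp hc
  rw [mem_degreeLT] at hf hg
  have key : ∑ i, (f * g).eval (α i) * (lcf α i)⁻¹ = 0 := by
    apply sum_eval_mul_inv_lcf hα
    rcases eq_or_ne f 0 with rfl | hf0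
    · rw [zero_mul]; exact (degree_zero (R := F)) ▸ WithBot.bot_lt_coe _
    rcases eq_or_ne g 0 with rfl | hg0
    · rw [mul_zero]; exact (degree_zero (R := F)) ▸ WithBot.bot_lt_coe _
    rw [← natDegree_lt_iff_degree_lt hf0] at hf
    rw [← natDegree_lt_iff_degree_lt hg0] at hg
    rw [← natDegree_lt_iff_degree_lt (mul_ne_zero hf0 hg0), natDegree_mul hf0 hg0]
    omega
  rw [← key]
  refine Finset.sum_congr rfl fun i _ => ?_
  rw [eval_mul, ← huu' i]
  ring

private lemma exists_char2_sqrt {F : Type} [Field F] [Fintype F]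
    (heven : Even (Fintype.card F)) (c : F) : ∃ u : F, u * u = c := by
  obtain ⟨p, hp⟩ := CharP.exists F
  haveI := hp
  obtain ⟨m, hprime, hcard⟩ := FiniteField.card F p
  haveI : Fact p.Prime := ⟨hprime⟩
  have hp2 : p = 2 := by
    have h2 : 2 ∣ p ^ (m : ℕ) := hcard ▸ heven.two_dvd
    exact ((Nat.prime_dvd_prime_iff_eq Nat.prime_two hprime).mp
      (Nat.Prime.dvd_of_dvd_pow Nat.prime_two h2)).symm
  subst hp2
  have hinj : Function.Injective (fun x : F => x * x) := by
    intro x y h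
    rcases mul_self_eq_mul_self_iff.mp h with h' | h'
    · exact h'
    · rw [h', CharTwo.neg_eq]
  exact Finite.injective_iff_surjective.mp hinj c

end AuxLemmas

/-- Over a finite field of even order `q ≥ n`, with `n/2 ≤ k + t - 1 ≤ n`,
for any `[n, k]` GRS code `C = GRS_k(α, v)` there exist nonzero multipliers `w` such that the
star product `S = C ⋆ GRS_t(α, w)` is an `[n, k+t-1]` GRS code which is weakly self-dual. -/
theorem existsWeaklySelfDualStarProd {F : Type} [Field F] [Fintype F] {n : ℕ} (k t : ℕ)
    (hk : 1 ≤ k) (ht : 1 ≤ t)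
    (heven : Even (Fintype.card F)) (hn : n ≤ Fintype.card F)
    (h1 : n ≤ 2 * (k + t - 1)) (h2 : k + t - 1 ≤ n)
    (α v : Fin n → F) (hα : Function.Injective α) (hv : ∀ i, v i ≠ 0) :
    ∃ w : Fin n → F, (∀ i, w i ≠ 0) ∧
      (∃ u : Fin n → F, (∀ i, u i ≠ 0) ∧
        starProd (GRS k α v) (GRS t α w) = GRS (k + t - 1) α u) ∧
      dualCode (starProd (GRS k α v) (GRS t α w)) ≤ starProd (GRS k α v) (GRS t α w) := by
  classical
  set m := k + t - 1 with hm
  choose u hu using fun i => exists_char2_sqrt heven ((lcf α i)⁻¹)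
  have hu0 : ∀ i, u i ≠ 0 := by
    intro i h
    apply lcf_ne_zero hα i
    rw [← inv_inv (lcf α i), ← hu i, h, mul_zero, _root_.inv_zero]
  set w := fun i => u i / v i with hwdef
  have hw0 : ∀ i, w i ≠ 0 := fun i => div_ne_zero (hu0 i) (hv i)
  have hvw : v * w = u := by
    funext i
    simp only [Pi.mul_apply, hwdef]
    rw [mul_div_assoc', mul_comm, mul_div_assoc, div_self (hv i), mul_one]
  have hS : starProd (GRS k α v) (GRS t α w) = GRS m α u := by
    rw [starProd_GRS hk ht, hvw]
  refine ⟨w, hw0, ⟨u, hu0, hS⟩, ?_⟩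
  rw [hS]
  have hle : GRS (n - m) α u ≤ dualCode (GRS m α u) := GRS_le_dualCode h2 hα hu
  have heq : GRS (n - m) α u = dualCode (GRS m α u) := by
    apply Submodule.eq_of_le_of_finrank_le hle
    rw [finrank_dualCode, finrank_GRS h2 hα hu0, finrank_GRS (Nat.sub_le n m) hα hu0]
  rw [← heq]
  exact GRS_mono (by omega) α u
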